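/- Let H be a real Hilbert space and T : H → H a bounded linear operator that is self-adjoint, positive semidefinite, non-expansive (‖T‖ ≤ 1), such that 1 belongs to the spectrum of T but 1 is not an eigenvalue of T. Then ‖(I − T + T^n)^{-1}‖ → ∞ as n → ∞. -/

import Mathlib

/-!
Write `S = 1 - T`. Since `0 ≤ T ≤ 1`, also `T - T² = S T S + T S T ≥ 0`, so `‖S x‖² ≤ ⟪S x, x⟫`,
and the moments `⟪T^n x, x⟫` are nonnegative and decreasing, as `T^(2k) S = T^k S T^k` and
`T^(2k+1) S = T^k (T - T²) T^k`. Their Cesàro means tend to `0` by the mean ergodic theorem,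
because `T` has no nonzero fixed point; hence `⟪T^n x, x⟫ → 0` and `T^n x → 0`. Combining
`‖S x‖² ≤ ⟪S x, x⟫` with `‖x - T^n x‖ ≤ n ‖S x‖` shows that `1 - T + T^n` is coercive, hence
invertible. If the norms of the inverses stayed below `M` along a subsequence, letting `n → ∞` in
`‖x‖ ≤ M ‖(1 - T + T^n) x‖` would give `‖x‖ ≤ M ‖S x‖`, so `⟪S x, x⟫ ≥ ‖x‖² / M²` and `S` would
be invertible, contradicting `1 ∈ spectrum ℝ T`.
-/

open Filter
open scoped RealInnerProductSpace Topology

namespace ContinuousLinearMap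

section Normed

variable {𝕜 E : Type*} [NontriviallyNormedField 𝕜] [NormedAddCommGroup E] [NormedSpace 𝕜 E]
  {T : E →L[𝕜] E}

lemma norm_sub_pow_apply_le (h : ‖T‖ ≤ 1) (x : E) (n : ℕ) :
    ‖x - (T ^ n) x‖ ≤ n * ‖x - T x‖ := by
  induction n with
  | zero => simp
  | succ n ih =>
    have hsplit : x - (T ^ (n + 1)) x = (x - T x) + T (x - (T ^ n) x) := by
      rw [pow_succ', mul_apply_eq_comp, map_sub]; abel
    calc ‖x - (T ^ (n + 1)) x‖ ≤ ‖x - T x‖ + ‖T (x - (T ^ n) x)‖ := hsplit ▸ norm_add_le _ _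
      _ ≤ ‖x - T x‖ + n * ‖x - T x‖ := by
        gcongr
        exact (T.le_of_opNorm_le h _).trans (by rwa [one_mul])
      _ = (n + 1 : ℕ) * ‖x - T x‖ := by push_cast; ring

lemma norm_le_norm_inverse_mul_norm_apply {A : E →L[𝕜] E} (hA : IsUnit A) (x : E) :
    ‖x‖ ≤ ‖Ring.inverse A‖ * ‖A x‖ :=
  calc ‖x‖ = ‖Ring.inverse A (A x)‖ := by
        rw [← mul_apply_eq_comp, Ring.inverse_mul_cancel A hA, one_apply_eq_self]
    _ ≤ ‖Ring.inverse A‖ * ‖A x‖ := le_opNorm _ _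

end Normed

variable {H : Type*} [NormedAddCommGroup H] [InnerProductSpace ℝ H] [CompleteSpace H]
  {T : H →L[ℝ] H}

lemma IsPositive.conj_of_isSelfAdjoint {A : H →L[ℝ] H} (hA : A.IsPositive) {S : H →L[ℝ] H}
    (hS : IsSelfAdjoint S) : (S * A * S).IsPositive := by
  have h := hA.conj_adjoint S
  rwa [hS.adjoint_eq, ← mul_def, ← mul_def, ← mul_assoc] at h

lemma isPositive_one_sub_of_norm_le_one (hT : IsSelfAdjoint T) (h : ‖T‖ ≤ 1) :
    (1 - T).IsPositive := by
  refine (isPositive_iff' _).2 ⟨.sub (.one _) hT, fun x => ?_⟩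
  have hCS := real_inner_le_norm (T x) x
  have hTx := T.le_of_opNorm_le h x
  rw [sub_apply, one_apply_eq_self, inner_sub_left, real_inner_self_eq_norm_sq, sub_nonneg]
  nlinarith [norm_nonneg x]

lemma IsPositive.sub_mul_self (hT : T.IsPositive) (hT1 : (1 - T).IsPositive) :
    (T - T * T).IsPositive := by
  have hsplit : T - T * T = (1 - T) * T * (1 - T) + T * (1 - T) * T := by noncomm_ring
  rw [hsplit]
  exact (hT.conj_of_isSelfAdjoint hT1.isSelfAdjoint).add
    (hT1.conj_of_isSelfAdjoint hT.isSelfAdjoint)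

lemma IsPositive.norm_apply_sq_le_inner (hT : T.IsPositive) (hT1 : (1 - T).IsPositive) (x : H) :
    ‖T x‖ ^ 2 ≤ ⟪T x, x⟫ := by
  have h := (hT.sub_mul_self hT1).inner_nonneg_left x
  rwa [sub_apply, mul_apply_eq_comp, inner_sub_left, hT.inner_left_eq_inner_right (T x),
    real_inner_self_eq_norm_sq, sub_nonneg] at h

lemma isPositive_pow_mul (hT : IsSelfAdjoint T) {P : H →L[ℝ] H} (hP : P.IsPositive)
    (hTP : (T * P).IsPositive) (hc : Commute T P) (n : ℕ) : (T ^ n * P).IsPositive := by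
  have hconj : ∀ {k : ℕ} {X : H →L[ℝ] H}, X.IsPositive → Commute (T ^ k) X →
      (T ^ k * T ^ k * X).IsPositive := fun hX hcomm => by
    rw [mul_assoc, hcomm.eq, ← mul_assoc]
    exact hX.conj_of_isSelfAdjoint (hT.pow _)
  obtain ⟨k, rfl | rfl⟩ := Nat.even_or_odd' n
  · rw [two_mul, pow_add]
    exact hconj hP (hc.pow_left k)
  · rw [pow_succ, two_mul, pow_add, mul_assoc _ T P]
    exact hconj hTP (((Commute.refl T).pow_left k).mul_right (hc.pow_left k))

lemma IsPositive.pow (hT : T.IsPositive) (n : ℕ) : (T ^ n).IsPositive := by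
  simpa using isPositive_pow_mul hT.isSelfAdjoint isPositive_one (by simpa using hT)
    (Commute.one_right T) n

lemma IsPositive.antitone_inner_pow_apply (hT : T.IsPositive) (hT1 : (1 - T).IsPositive)
    (x : H) : Antitone fun n => ⟪(T ^ n) x, x⟫ := by
  refine antitone_nat_of_succ_le fun n => ?_
  have hTS : (T * (1 - T)).IsPositive := by
    rw [mul_sub, mul_one]; exact hT.sub_mul_self hT1
  have h := (isPositive_pow_mul hT.isSelfAdjoint hT1 hTS
    ((Commute.one_right T).sub_right (Commute.refl T)) n).inner_nonneg_left x
  rwa [mul_sub, mul_one, ← pow_succ, sub_apply, inner_sub_left, sub_nonneg] at h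

lemma IsPositive.tendsto_inner_pow_apply_self (hT : T.IsPositive) (hne : ‖T‖ ≤ 1)
    (hfix : ∀ x, T x = x → x = 0) (x : H) :
    Tendsto (fun n => ⟪(T ^ n) x, x⟫) atTop (𝓝 0) := by
  set m : ℕ → ℝ := fun n => ⟪(T ^ n) x, x⟫
  have hm : Tendsto m atTop (𝓝 (⨅ n, m n)) :=
    tendsto_atTop_ciInf (hT.antitone_inner_pow_apply (isPositive_one_sub_of_norm_le_one
      hT.isSelfAdjoint hne) x) ⟨0, Set.forall_mem_range.2 fun n => (hT.pow n).inner_nonneg_left x⟩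
  have hcesaro : Tendsto (fun N : ℕ => (N⁻¹ : ℝ) * ∑ n ∈ Finset.range N, m n) atTop (𝓝 0) := by
    have h := (T.tendsto_birkhoffAverage_orthogonalProjection hne x).inner (𝕜 := ℝ)
      (tendsto_const_nhds (x := x))
    rw [Submodule.orthogonalProjectionOnto_eq_zero_iff.2 ?_] at h
    · simpa [birkhoffAverage, birkhoffSum, real_inner_smul_left, sum_inner, m] using h
    · rw [(Submodule.orthogonal_eq_top_iff _).2
        ((Submodule.eq_bot_iff _).2 fun y hy => hfix y (by simpa using hy))]
      exact Submodule.mem_top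
  rwa [← tendsto_nhds_unique hm.cesaro hcesaro]

lemma IsPositive.tendsto_pow_apply (hT : T.IsPositive) (hne : ‖T‖ ≤ 1)
    (hfix : ∀ x, T x = x → x = 0) (x : H) :
    Tendsto (fun n => (T ^ n) x) atTop (𝓝 0) := by
  have h := ((hT.tendsto_inner_pow_apply_self hne hfix x).comp
    (tendsto_id.const_mul_atTop' two_pos)).sqrt
  have hnorm : ∀ n, ‖(T ^ n) x‖ = √⟪(T ^ (2 * n)) x, x⟫ := fun n => by
    rw [two_mul, pow_add, mul_apply_eq_comp, (hT.pow n).inner_left_eq_inner_right,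
      real_inner_self_eq_norm_sq, Real.sqrt_sq (norm_nonneg _)]
  rw [tendsto_zero_iff_norm_tendsto_zero]
  simpa only [hnorm, Function.comp_def, id, Real.sqrt_zero] using h

lemma le_inner_one_sub_add_pow_apply (hT : T.IsPositive) (hne : ‖T‖ ≤ 1) (n : ℕ) (x : H) :
    ‖x‖ ^ 2 * ((2 * (n + 1 : ℝ)) ^ 2)⁻¹ ≤ ⟪(1 - T + T ^ n) x, x⟫ := by
  set r := ‖x‖
  set s := ‖x - T x‖
  have hT1 := isPositive_one_sub_of_norm_le_one hT.isSelfAdjoint hne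
  have hq : s ^ 2 ≤ ⟪x - T x, x⟫ := by
    simpa using hT1.norm_apply_sq_le_inner (by simpa using hT) x
  have hp0 : 0 ≤ ⟪(T ^ n) x, x⟫ := (hT.pow n).inner_nonneg_left x
  have hp : r ^ 2 - n * s * r ≤ ⟪(T ^ n) x, x⟫ := by
    have h1 := real_inner_le_norm (x - (T ^ n) x) x
    have h2 := mul_le_mul_of_nonneg_right (norm_sub_pow_apply_le hne x n) (norm_nonneg x)
    rw [inner_sub_left, real_inner_self_eq_norm_sq] at h1
    linarith
  have hsplit : ⟪(1 - T + T ^ n) x, x⟫ = ⟪x - T x, x⟫ + ⟪(T ^ n) x, x⟫ := by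
    rw [add_apply, sub_apply, one_apply_eq_self, inner_add_left]
  have hr : 0 ≤ r := norm_nonneg x
  have hs : 0 ≤ s := norm_nonneg _
  rw [hsplit, mul_inv_le_iff₀ (by positivity)]
  have hN : (4 : ℝ) ≤ (2 * (n + 1)) ^ 2 := by nlinarith [(Nat.cast_nonneg n : (0 : ℝ) ≤ n)]
  -- The constant comes from splitting at `s = r / (2 (n + 1))`: `hq` wins above it, `hp` below.
  rcases le_or_gt (2 * (n + 1) * s) r with h | h
  · have hsum : r ^ 2 / 2 ≤ ⟪x - T x, x⟫ + ⟪(T ^ n) x, x⟫ := by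
      nlinarith [mul_le_mul_of_nonneg_right h hr, mul_nonneg hs hr]
    nlinarith [mul_le_mul hsum hN (by norm_num) (by linarith [sq_nonneg s])]
  · have hsq : r ^ 2 < (2 * (n + 1)) ^ 2 * s ^ 2 := by
      rw [← mul_pow]; exact pow_lt_pow_left₀ h hr two_ne_zero
    nlinarith

lemma isUnit_one_sub_add_pow (hT : T.IsPositive) (hne : ‖T‖ ≤ 1) (n : ℕ) :
    IsUnit (1 - T + T ^ n) := by
  have hc : (0 : ℝ) < ((2 * (n + 1 : ℝ)) ^ 2)⁻¹ := by positivity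
  exact isUnit_of_forall_le_norm_inner_map _ (c := ⟨_, hc.le⟩) hc fun x =>
    (le_inner_one_sub_add_pow_apply hT hne n x).trans (Real.le_norm_self _)

lemma IsPositive.isUnit_of_le_mul_norm_apply (hT : T.IsPositive) (hT1 : (1 - T).IsPositive)
    {M : ℝ} (hM : 0 < M) (h : ∀ x, ‖x‖ ≤ M * ‖T x‖) : IsUnit T := by
  have hc : (0 : ℝ) < (M ^ 2)⁻¹ := by positivity
  refine isUnit_of_forall_le_norm_inner_map T (c := ⟨_, hc.le⟩) hc fun x => ?_
  have h1 : ‖x‖ ^ 2 ≤ M ^ 2 * ‖T x‖ ^ 2 := by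
    rw [← mul_pow]; exact pow_le_pow_left₀ (norm_nonneg x) (h x) 2
  calc ‖x‖ ^ 2 * (M ^ 2)⁻¹ ≤ ‖T x‖ ^ 2 := by
        rw [mul_inv_le_iff₀ (by positivity)]; linarith
    _ ≤ ⟪T x, x⟫ := hT.norm_apply_sq_le_inner hT1 x
    _ ≤ ‖⟪T x, x⟫‖ := Real.le_norm_self _

end ContinuousLinearMap

/-- Second limit of the discrepancy principle (Theorem 2.7) for the family
`B_n = T - T^n`: if `1` lies in the spectrum of `T` but is not an eigenvalue,
then the stability constants `‖(I - T + T^n)⁻¹‖` blow up. -/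
theorem stmt_9
    {H : Type*} [NormedAddCommGroup H] [InnerProductSpace ℝ H] [CompleteSpace H]
    (T : H →L[ℝ] H)
    (hsa : ∀ x y : H, ⟪T x, y⟫ = ⟪x, T y⟫)
    (hpos : ∀ x : H, 0 ≤ ⟪T x, x⟫)
    (hne : ‖T‖ ≤ 1)
    (hspec : (1 : ℝ) ∈ spectrum ℝ T)
    (hev : ∀ x : H, T x = x → x = 0) :
    Tendsto (fun n : ℕ => ‖Ring.inverse ((1 : H →L[ℝ] H) - T + T ^ n)‖)
      atTop atTop := by
  have hT : T.IsPositive := (T.isPositive_iff).2 ⟨hsa, hpos⟩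
  have hT1 := ContinuousLinearMap.isPositive_one_sub_of_norm_le_one hT.isSelfAdjoint hne
  have hS : ¬ IsUnit (1 - T) := by simpa [spectrum.mem_iff] using hspec
  by_contra h
  rw [tendsto_atTop] at h
  push Not at h
  obtain ⟨M, hM⟩ := h
  obtain ⟨n₀, hn₀⟩ := hM.exists
  refine hS (hT1.isUnit_of_le_mul_norm_apply (by simpa using hT)
    ((norm_nonneg _).trans_lt hn₀) fun x => ?_)
  have hlim : Tendsto (fun n => M * ‖((1 : H →L[ℝ] H) - T + T ^ n) x‖) atTop
      (𝓝 (M * ‖(1 - T) x‖)) := by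
    simpa using (((hT.tendsto_pow_apply hne hev x).const_add ((1 - T) x)).norm).const_mul M
  refine isClosed_Ici.mem_of_frequently_of_tendsto (hM.mono fun n hn => ?_) hlim
  exact (ContinuousLinearMap.norm_le_norm_inverse_mul_norm_apply
    (ContinuousLinearMap.isUnit_one_sub_add_pow hT hne n) x).trans
    (mul_le_mul_of_nonneg_right hn.le (norm_nonneg _))
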